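/- arXiv:2503.03415 — 4 statements merged into one kernel-verified Lean document; each statement's English description precedes it below -/
import Mathlib

section
/- Let $z_1,\dots,z_m$ be $m$ distinct points in the open unit disk $\mathbb{D}\subset\mathbb{C}$. Then the $m\times m$ matrix with $(i,j)$ entry $\frac{1}{1-\overline{z_i}z_j}$ is invertible. -/
/-!
Expanding each entry as a geometric series, `(1 - z̄ᵢ zⱼ)⁻¹ = ∑ₙ z̄ᵢⁿ zⱼⁿ`, turns the quadratic form
of the kernel matrix into a sum of squares: `vᴴ K v = ∑ₙ |∑ᵢ vᵢ zᵢⁿ|²`. If the points are distinct,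
the power sums `∑ᵢ vᵢ zᵢⁿ` (`n < m`) are the entries of a Vandermonde matrix applied to `v`, so they
cannot all vanish for `v ≠ 0`. Hence the matrix is positive definite, in particular invertible.
-/

open Matrix ComplexConjugate
open scoped ComplexOrder

variable {𝕜 ι : Type*} [RCLike 𝕜]

noncomputable def szegoKernelMatrix (z : ι → 𝕜) : Matrix ι ι 𝕜 :=
  of fun i j => (1 - conj (z i) * z j)⁻¹

theorem szegoKernelMatrix_isHermitian (z : ι → 𝕜) : (szegoKernelMatrix z).IsHermitian := by
  ext i j
  simp [szegoKernelMatrix, mul_comm]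

theorem norm_conj_mul_lt_one {a b : 𝕜} (ha : ‖a‖ < 1) (hb : ‖b‖ < 1) : ‖conj a * b‖ < 1 := by
  rw [norm_mul, RCLike.norm_conj]
  exact mul_lt_one_of_nonneg_of_lt_one_left (norm_nonneg a) ha hb.le

variable [Fintype ι]

theorem exists_sum_mul_pow_ne_zero {K : Type*} [Field K] {z v : ι → K}
    (hz : Function.Injective z) (hv : v ≠ 0) : ∃ n : ℕ, ∑ i, v i * z i ^ n ≠ 0 := by
  let e := Fintype.equivFin ι
  by_contra! h
  have hv' : v ∘ e.symm = 0 :=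
    eq_zero_of_forall_pow_sum_mul_pow_eq_zero (hz.comp e.symm.injective) fun n =>
      (e.symm.sum_comp fun i => v i * z i ^ (n : ℕ)).trans (h n)
  exact hv (funext fun i => by simpa using congrFun hv' (e i))

theorem hasSum_star_dotProduct_szegoKernelMatrix_mulVec {z : ι → 𝕜} (hz : ∀ i, ‖z i‖ < 1)
    (v : ι → 𝕜) :
    HasSum (fun n : ℕ => ((‖∑ i, v i * z i ^ n‖ ^ 2 : ℝ) : 𝕜))
      (star v ⬝ᵥ (szegoKernelMatrix z *ᵥ v)) := by
  have hentry (i j : ι) :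
      HasSum (fun n : ℕ => conj (v i) * v j * (conj (z i) * z j) ^ n)
        (conj (v i) * v j * szegoKernelMatrix z i j) :=
    (hasSum_geometric_of_norm_lt_one (norm_conj_mul_lt_one (hz i) (hz j))).mul_left _
  convert hasSum_sum fun i _ => hasSum_sum fun j _ => hentry i j using 1
  · ext n
    rw [RCLike.ofReal_pow, ← RCLike.conj_mul, map_sum, Finset.sum_mul_sum]
    simp only [map_mul, map_pow]
    exact Finset.sum_congr rfl fun i _ => Finset.sum_congr rfl fun j _ => by ring
  · simp only [dotProduct, mulVec, Finset.mul_sum, Pi.star_apply, RCLike.star_def]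
    exact Finset.sum_congr rfl fun i _ => Finset.sum_congr rfl fun j _ => by ring

theorem szegoKernelMatrix_posDef {z : ι → 𝕜} (hz : ∀ i, ‖z i‖ < 1)
    (hinj : Function.Injective z) : (szegoKernelMatrix z).PosDef := by
  refine .of_dotProduct_mulVec_pos (szegoKernelMatrix_isHermitian z) fun v hv => ?_
  have hS := hasSum_star_dotProduct_szegoKernelMatrix_mulVec hz v
  have hsum := (RCLike.summable_ofReal _).mp hS.summable
  rw [hS.unique ((RCLike.hasSum_ofReal _).mpr hsum.hasSum), RCLike.ofReal_pos]
  obtain ⟨n, hn⟩ := exists_sum_mul_pow_ne_zero hinj hv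
  exact hsum.tsum_pos (fun _ => by positivity) n (by positivity)

/-- For `m` distinct points in the open unit disk, the matrix with
entries `1/(1 - conj z_i * z_j)` is invertible. -/
theorem stmt_0 (m : ℕ) (z : Fin m → ℂ) (hz : ∀ i, ‖z i‖ < 1)
    (hinj : Function.Injective z) :
    IsUnit (Matrix.of fun i j : Fin m => (1 - (starRingEnd ℂ) (z i) * z j)⁻¹) :=
  (szegoKernelMatrix_posDef hz hinj).isUnit
end

section
/- Let $B(z)=\prod_{j=1}^m \frac{z_j-z}{1-\overline{z_j}z}$ be a finite Blaschke product with $z_j\in\mathbb{D}$, and define $B^*(z)=\overline{B(\overline z)}$. Let $S_\beta$ be the backward shift on a weighted Hardy space $H^2_\beta$ with $w_k\to 1$ and $M_z$ the forward shift (multiplication by $z$). Then $B^*(S_\beta)\,B(M_z)=\mathbf{I}$. -/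
/-!
Because `S * M = 1`, for all scalars `a, b` one has `(a - S)(b - M) = (1 - b S)(1 - a M)`, so each
Möbius factor `(z̄ⱼ - S)(1 - zⱼ S)⁻¹` of `B*(S)` is a left inverse of the factor
`(zⱼ - M)(1 - z̄ⱼ M)⁻¹` of `B(M)`. The factors of `B*(S)` lie in the double centralizer of `S`,
which is commutative, so the two products telescope. The inverses exist because `w_k → 1` gives
`‖Sⁿ‖, ‖Mⁿ‖ ≤ C ρⁿ` for every `ρ > 1`, so for `|z| < 1` some power of `z S` (or `z M`) has norm
less than one.
-/

open Filter Topology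
open scoped ENNReal

theorem Commute.ringInverse_right {M₀ : Type*} [MonoidWithZero M₀] {a b : M₀}
    (h : Commute a b) : Commute a (Ring.inverse b) := by
  by_cases hb : IsUnit b
  · obtain ⟨u, rfl⟩ := hb
    rw [Ring.inverse_unit]
    exact h.units_inv_right
  · rw [Ring.inverse_non_unit _ hb]
    exact Commute.zero_right a

theorem List.prod_map_mul_prod_map_eq_one {M ι : Type*} [Monoid M] {A B : ι → M}
    (hA : ∀ i j, Commute (A i) (A j)) (hAB : ∀ i, A i * B i = 1) (l : List ι) :
    (l.map A).prod * (l.map B).prod = 1 := by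
  induction l with
  | nil => simp
  | cons i l ih =>
    have hi : Commute (A i) (l.map A).prod :=
      Commute.list_prod_right _ _ fun x hx => by
        obtain ⟨j, -, rfl⟩ := List.mem_map.mp hx
        exact hA i j
    calc (List.map A (i :: l)).prod * (List.map B (i :: l)).prod
        = (l.map A).prod * (A i * B i) * (l.map B).prod := by
          simp only [List.map_cons, List.prod_cons, hi.eq, mul_assoc]
      _ = 1 := by rw [hAB, mul_one, ih]

section MobiusFactors

variable {R A : Type*} [CommRing R] [Ring A] [Algebra R A] {S M : A}

theorem smul_one_sub_mul_smul_one_sub_of_mul_eq_one (hSM : S * M = 1) (a b : R) :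
    (a • 1 - S) * (b • 1 - M) = (1 - b • S) * (1 - a • M) := by
  simp only [sub_mul, mul_sub, smul_mul_assoc, mul_smul_comm, one_mul, mul_one, smul_sub,
    smul_smul, hSM, mul_comm b a]
  abel

theorem Subalgebra.ringInverse_mem_centralizer {s : Set A} {u : A}
    (hu : u ∈ Subalgebra.centralizer R s) : Ring.inverse u ∈ Subalgebra.centralizer R s :=
  fun g hg => (Commute.ringInverse_right (hu g hg)).eq

theorem mobius_factor_mem_centralizer_centralizer (a b : R) :
    (a • 1 - S) * Ring.inverse (1 - b • S) ∈
      Subalgebra.centralizer R (Set.centralizer ({S} : Set A)) := by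
  set C := Subalgebra.centralizer R (Set.centralizer ({S} : Set A))
  have hS : S ∈ C := Set.subset_centralizer_centralizer (Set.mem_singleton S)
  exact C.mul_mem (C.sub_mem (C.smul_mem C.one_mem a) hS)
    (Subalgebra.ringInverse_mem_centralizer (C.sub_mem C.one_mem (C.smul_mem hS b)))

theorem mobius_factor_mul_eq_one (hSM : S * M = 1) (a b : R)
    (hu : IsUnit (1 - b • S)) (hv : IsUnit (1 - a • M)) :
    (a • 1 - S) * Ring.inverse (1 - b • S) * ((b • 1 - M) * Ring.inverse (1 - a • M)) = 1 := by
  have hcomm : Commute (a • 1 - S) (Ring.inverse (1 - b • S)) :=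
    Commute.ringInverse_right <| ((Commute.one_left _).smul_left a).sub_left
      ((Commute.one_right S).sub_right ((Commute.refl S).smul_right b))
  calc (a • 1 - S) * Ring.inverse (1 - b • S) * ((b • 1 - M) * Ring.inverse (1 - a • M))
      = Ring.inverse (1 - b • S) * ((a • 1 - S) * (b • 1 - M)) * Ring.inverse (1 - a • M) := by
        rw [hcomm.eq]; simp only [mul_assoc]
    _ = 1 := by
        rw [smul_one_sub_mul_smul_one_sub_of_mul_eq_one hSM, ← mul_assoc,
          Ring.inverse_mul_cancel _ hu, one_mul, Ring.mul_inverse_cancel _ hv]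

theorem blaschke_prod_mul_eq_one (hSM : S * M = 1) {ι : Type*} (a b : ι → R)
    (hu : ∀ j, IsUnit (1 - b j • S)) (hv : ∀ j, IsUnit (1 - a j • M)) (l : List ι) :
    (l.map fun j => (a j • 1 - S) * Ring.inverse (1 - b j • S)).prod *
      (l.map fun j => (b j • 1 - M) * Ring.inverse (1 - a j • M)).prod = 1 :=
  List.prod_map_mul_prod_map_eq_one
    (fun i j => Set.centralizer_centralizer_comm_of_comm
      (fun x hx y hy => by rw [Set.mem_singleton_iff.mp hx, Set.mem_singleton_iff.mp hy])
      _ (mobius_factor_mem_centralizer_centralizer (a i) (b i))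
      _ (mobius_factor_mem_centralizer_centralizer (a j) (b j)))
    (fun j => mobius_factor_mul_eq_one hSM (a j) (b j) (hu j) (hv j)) l

end MobiusFactors

theorem isUnit_one_sub_of_norm_pow_lt_one {A : Type*} [NormedRing A] [CompleteSpace A] {x : A}
    {n : ℕ} (h : ‖x ^ n‖ < 1) : IsUnit (1 - x) := by
  have hcomm : Commute (1 - x) (∑ i ∈ Finset.range n, x ^ i) :=
    (mul_neg_geom_sum x n).trans (geom_sum_mul_neg x n).symm
  have hunit : IsUnit ((1 - x) * ∑ i ∈ Finset.range n, x ^ i) := by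
    rw [mul_neg_geom_sum]
    exact (Units.oneSub _ h).isUnit
  exact (hcomm.isUnit_mul_iff.mp hunit).1

theorem isUnit_one_sub_smul_of_norm_pow_le {𝕜 A : Type*} [NormedField 𝕜] [NormedRing A]
    [NormedAlgebra 𝕜 A] [CompleteSpace A] {T : A}
    (hT : ∀ ρ > 1, ∃ C, ∀ n, ‖T ^ n‖ ≤ C * ρ ^ n) {α : 𝕜} (hα : ‖α‖ < 1) :
    IsUnit (1 - α • T) := by
  set r := ‖α‖
  have hr : 0 ≤ r := norm_nonneg α
  -- `2 / (1 + r)` is the harmonic mean of `1` and `1 / r`, hence strictly between them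
  obtain ⟨C, hC⟩ := hT (2 / (1 + r)) (by show 1 < _; rw [lt_div_iff₀ (by linarith)]; linarith)
  have hq : r * (2 / (1 + r)) < 1 := by rw [mul_div_assoc', div_lt_one (by linarith)]; linarith
  have hlim : Tendsto (fun n : ℕ => C * (r * (2 / (1 + r))) ^ n) atTop (𝓝 0) := by
    simpa using (tendsto_pow_atTop_nhds_zero_of_lt_one (by positivity) hq).const_mul C
  obtain ⟨n, hn⟩ := (hlim.eventually_lt_const one_pos).exists
  refine isUnit_one_sub_of_norm_pow_lt_one (n := n) ?_
  calc ‖(α • T) ^ n‖ = r ^ n * ‖T ^ n‖ := by rw [smul_pow, norm_smul, norm_pow]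
    _ ≤ r ^ n * (C * (2 / (1 + r)) ^ n) := by gcongr; exact hC n
    _ = C * (r * (2 / (1 + r))) ^ n := by ring
    _ < 1 := hn

theorem exists_le_mul_of_eventually_antitone {a : ℕ → ℝ} (ha : ∀ k, 0 < a k)
    (hanti : ∀ᶠ k in atTop, a (k + 1) ≤ a k) : ∃ C, ∀ k n, a (k + n) ≤ C * a k := by
  obtain ⟨K, hK⟩ := eventually_atTop.mp hanti
  have hmono : AntitoneOn a {k | K ≤ k} := antitoneOn_nat_Ici_of_succ_le hK
  have hs : (Finset.range (K + 1)).Nonempty := Finset.nonempty_range_add_one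
  have hmem : ∀ {k}, k ≤ K → k ∈ Finset.range (K + 1) := fun hk => Finset.mem_range.mpr (by omega)
  set U := (Finset.range (K + 1)).sup' hs a
  set L := (Finset.range (K + 1)).inf' hs a
  have hL : 0 < L := (Finset.lt_inf'_iff hs).mpr fun k _ => ha k
  have hU : ∀ k, a k ≤ U := by
    intro k
    rcases le_total k K with hk | hk
    · exact Finset.le_sup' a (hmem hk)
    · exact (hmono (le_refl K) hk hk).trans (Finset.le_sup' a (hmem le_rfl))
  refine ⟨max 1 (U / L), fun k n => ?_⟩
  rcases le_total K k with hk | hk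
  · calc a (k + n) ≤ a k := hmono hk (show K ≤ k + n by omega) (by omega)
      _ ≤ max 1 (U / L) * a k := le_mul_of_one_le_left (ha k).le (le_max_left _ _)
  · calc a (k + n) ≤ U / L * L := by rw [div_mul_cancel₀ _ hL.ne']; exact hU _
      _ ≤ max 1 (U / L) * a k :=
        mul_le_mul (le_max_right _ _) (Finset.inf'_le a (hmem hk)) hL.le
          (zero_le_one.trans (le_max_left _ _))

theorem exists_div_le_mul_pow_of_tendsto_ratio {γ : ℕ → ℝ} (hγ : ∀ k, 0 < γ k)
    (hratio : Tendsto (fun k => γ (k + 1) / γ k) atTop (𝓝 1)) {ρ : ℝ} (hρ : 1 < ρ) :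
    ∃ C, ∀ k n, γ (k + n) / γ k ≤ C * ρ ^ n := by
  have hρ0 : 0 < ρ := one_pos.trans hρ
  obtain ⟨C, hC⟩ := exists_le_mul_of_eventually_antitone (a := fun k => γ k / ρ ^ k)
    (fun k => div_pos (hγ k) (pow_pos hρ0 k)) <| by
      filter_upwards [hratio.eventually_lt_const hρ] with k hk
      rw [div_lt_iff₀ (hγ k)] at hk
      rw [div_le_div_iff₀ (pow_pos hρ0 _) (pow_pos hρ0 _), pow_succ]
      nlinarith [pow_pos hρ0 k]
  refine ⟨C, fun k n => ?_⟩
  have hγk : 0 < γ k / ρ ^ k := div_pos (hγ k) (pow_pos hρ0 k)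
  calc γ (k + n) / γ k = γ (k + n) / ρ ^ (k + n) / (γ k / ρ ^ k) * ρ ^ n := by
        field_simp; ring
    _ ≤ C * ρ ^ n := by
        gcongr
        exact (div_le_iff₀ hγk).mpr (hC k n)

namespace lp

variable {E : Type*} [NormedAddCommGroup E] {p : ℝ≥0∞} [Fact (1 ≤ p)]

theorem norm_le_mul_of_tsum_le (hp : 0 < p.toReal) {g f : lp (fun _ : ℕ => E) p} {D : ℝ}
    (hD : 0 ≤ D) (h : ∑' k, ‖g k‖ ^ p.toReal ≤ D ^ p.toReal * ∑' k, ‖f k‖ ^ p.toReal) :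
    ‖g‖ ≤ D * ‖f‖ := by
  refine norm_le_of_tsum_le hp (by positivity) ?_
  rwa [Real.mul_rpow hD (norm_nonneg f), norm_rpow_eq_tsum hp]

theorem norm_le_mul_of_norm_apply_le_nat_add (hp : 0 < p.toReal)
    {g f : lp (fun _ : ℕ => E) p} {n : ℕ} {D : ℝ} (hD : 0 ≤ D)
    (h : ∀ k, ‖g k‖ ≤ D * ‖f (k + n)‖) : ‖g‖ ≤ D * ‖f‖ := by
  have hf := (lp.memℓp f).summable hp
  refine norm_le_mul_of_tsum_le hp hD ?_
  calc ∑' k, ‖g k‖ ^ p.toReal ≤ ∑' k, D ^ p.toReal * ‖f (k + n)‖ ^ p.toReal := by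
        refine Summable.tsum_le_tsum (fun k => ?_) ((lp.memℓp g).summable hp)
          (((summable_nat_add_iff n).mpr hf).mul_left _)
        rw [← Real.mul_rpow hD (norm_nonneg _)]
        exact Real.rpow_le_rpow (norm_nonneg _) (h k) hp.le
    _ ≤ D ^ p.toReal * ∑' k, ‖f k‖ ^ p.toReal := by
        rw [tsum_mul_left]
        exact mul_le_mul_of_nonneg_left
          (tsum_comp_le_tsum_of_inj hf (fun k => by positivity) (add_left_injective n))
          (by positivity)

theorem norm_le_mul_of_norm_apply_nat_add_le (hp : 0 < p.toReal)
    {g f : lp (fun _ : ℕ => E) p} {n : ℕ} {D : ℝ} (hD : 0 ≤ D) (h0 : ∀ k < n, g k = 0)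
    (h : ∀ k, ‖g (k + n)‖ ≤ D * ‖f k‖) : ‖g‖ ≤ D * ‖f‖ := by
  have hg := (lp.memℓp g).summable hp
  refine norm_le_mul_of_tsum_le hp hD ?_
  calc ∑' k, ‖g k‖ ^ p.toReal = ∑' k, ‖g (k + n)‖ ^ p.toReal := by
        rw [← hg.sum_add_tsum_nat_add n, Finset.sum_eq_zero, zero_add]
        intro k hk
        simp [h0 k (Finset.mem_range.mp hk), Real.zero_rpow hp.ne']
    _ ≤ ∑' k, D ^ p.toReal * ‖f k‖ ^ p.toReal := by
        refine Summable.tsum_le_tsum (fun k => ?_) ((summable_nat_add_iff n).mpr hg)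
          (((lp.memℓp f).summable hp).mul_left _)
        rw [← Real.mul_rpow hD (norm_nonneg _)]
        exact Real.rpow_le_rpow (norm_nonneg _) (h k) hp.le
    _ = D ^ p.toReal * ∑' k, ‖f k‖ ^ p.toReal := tsum_mul_left

end lp

section WeightedShift

variable {p : ℝ≥0∞} [Fact (1 ≤ p)] {β : ℕ → ℝ}

-- `S_β` and `M_z` in the orthonormal basis `zᵏ / βₖ` of `H²_β`, acting on coordinate sequences.
def IsWeightedBackwardShift (β : ℕ → ℝ) (S : lp (fun _ : ℕ => ℂ) p →L[ℂ] lp (fun _ : ℕ => ℂ) p) :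
    Prop :=
  ∀ f k, S f k = ((β k / β (k + 1) : ℝ) : ℂ) * f (k + 1)

def IsWeightedForwardShift (β : ℕ → ℝ) (M : lp (fun _ : ℕ => ℂ) p →L[ℂ] lp (fun _ : ℕ => ℂ) p) :
    Prop :=
  (∀ f, M f 0 = 0) ∧ ∀ f k, M f (k + 1) = ((β (k + 1) / β k : ℝ) : ℂ) * f k

namespace IsWeightedBackwardShift

variable {S : lp (fun _ : ℕ => ℂ) p →L[ℂ] lp (fun _ : ℕ => ℂ) p}

theorem pow_apply (hS : IsWeightedBackwardShift β S) (hβ : ∀ k, β k ≠ 0) (n : ℕ)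
    (f : lp (fun _ : ℕ => ℂ) p) (k : ℕ) :
    (S ^ n) f k = ((β k / β (k + n) : ℝ) : ℂ) * f (k + n) := by
  induction n generalizing f with
  | zero => simp [div_self (hβ k)]
  | succ n ih =>
    rw [pow_succ, mul_apply_eq_comp, ih, hS, ← mul_assoc, ← Complex.ofReal_mul,
      div_mul_div_cancel₀ (hβ _), add_assoc]

theorem mul_eq_one (hS : IsWeightedBackwardShift β S)
    {M : lp (fun _ : ℕ => ℂ) p →L[ℂ] lp (fun _ : ℕ => ℂ) p} (hM : IsWeightedForwardShift β M)
    (hβ : ∀ k, β k ≠ 0) : S * M = 1 := by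
  ext f k
  rw [mul_apply_eq_comp, hS, hM.2, ← mul_assoc, ← Complex.ofReal_mul,
    div_mul_div_cancel₀ (hβ _), div_self (hβ k), Complex.ofReal_one, one_mul,
    one_apply_eq_self]

theorem norm_pow_le (hp : 0 < p.toReal) (hS : IsWeightedBackwardShift β S)
    (hβ : ∀ k, 0 < β k) {n : ℕ} {D : ℝ} (hD : ∀ k, β k / β (k + n) ≤ D) : ‖S ^ n‖ ≤ D := by
  have hD0 : 0 ≤ D := (div_pos (hβ 0) (hβ _)).le.trans (hD 0)
  refine ContinuousLinearMap.opNorm_le_bound _ hD0 fun f =>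
    lp.norm_le_mul_of_norm_apply_le_nat_add (n := n) hp hD0 fun k => ?_
  rw [hS.pow_apply (fun k => (hβ k).ne'), norm_mul, Complex.norm_real, Real.norm_of_nonneg
    (div_pos (hβ _) (hβ _)).le]
  exact mul_le_mul_of_nonneg_right (hD k) (norm_nonneg _)

theorem exists_norm_pow_le_mul_pow (hp : 0 < p.toReal) (hS : IsWeightedBackwardShift β S)
    (hβ : ∀ k, 0 < β k) (hw : Tendsto (fun k => β (k + 1) / β k) atTop (𝓝 1)) {ρ : ℝ}
    (hρ : 1 < ρ) : ∃ C, ∀ n, ‖S ^ n‖ ≤ C * ρ ^ n := by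
  have hw' : Tendsto (fun k => (β (k + 1))⁻¹ / (β k)⁻¹) atTop (𝓝 1) := by
    simp only [inv_div_inv]
    simpa only [inv_div, inv_one] using hw.inv₀ one_ne_zero
  obtain ⟨C, hC⟩ :=
    exists_div_le_mul_pow_of_tendsto_ratio (fun k => inv_pos.mpr (hβ k)) hw' hρ
  exact ⟨C, fun n => hS.norm_pow_le hp hβ fun k => by simpa only [inv_div_inv] using hC k n⟩

end IsWeightedBackwardShift

namespace IsWeightedForwardShift

variable {M : lp (fun _ : ℕ => ℂ) p →L[ℂ] lp (fun _ : ℕ => ℂ) p}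

theorem pow_apply_add (hM : IsWeightedForwardShift β M) (hβ : ∀ k, β k ≠ 0) (n : ℕ)
    (f : lp (fun _ : ℕ => ℂ) p) (k : ℕ) :
    (M ^ n) f (k + n) = ((β (k + n) / β k : ℝ) : ℂ) * f k := by
  induction n generalizing k with
  | zero => simp [div_self (hβ k)]
  | succ n ih =>
    rw [pow_succ', mul_apply_eq_comp, ← add_assoc, hM.2, ih, ← mul_assoc,
      ← Complex.ofReal_mul, div_mul_div_cancel₀ (hβ _)]

theorem pow_apply_of_lt (hM : IsWeightedForwardShift β M) {n : ℕ} (f : lp (fun _ : ℕ => ℂ) p)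
    {k : ℕ} (hk : k < n) : (M ^ n) f k = 0 := by
  induction n generalizing k with
  | zero => omega
  | succ n ih =>
    rw [pow_succ', mul_apply_eq_comp]
    rcases k with _ | k
    · exact hM.1 _
    · rw [hM.2, ih (by omega), mul_zero]

theorem norm_pow_le (hp : 0 < p.toReal) (hM : IsWeightedForwardShift β M)
    (hβ : ∀ k, 0 < β k) {n : ℕ} {D : ℝ} (hD : ∀ k, β (k + n) / β k ≤ D) : ‖M ^ n‖ ≤ D := by
  have hD0 : 0 ≤ D := (div_pos (hβ _) (hβ 0)).le.trans (hD 0)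
  refine ContinuousLinearMap.opNorm_le_bound _ hD0 fun f =>
    lp.norm_le_mul_of_norm_apply_nat_add_le hp hD0 (fun k hk => hM.pow_apply_of_lt f hk)
      fun k => ?_
  rw [hM.pow_apply_add (fun k => (hβ k).ne'), norm_mul, Complex.norm_real, Real.norm_of_nonneg
    (div_pos (hβ _) (hβ _)).le]
  exact mul_le_mul_of_nonneg_right (hD k) (norm_nonneg _)

theorem exists_norm_pow_le_mul_pow (hp : 0 < p.toReal) (hM : IsWeightedForwardShift β M)
    (hβ : ∀ k, 0 < β k) (hw : Tendsto (fun k => β (k + 1) / β k) atTop (𝓝 1)) {ρ : ℝ}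
    (hρ : 1 < ρ) : ∃ C, ∀ n, ‖M ^ n‖ ≤ C * ρ ^ n := by
  obtain ⟨C, hC⟩ := exists_div_le_mul_pow_of_tendsto_ratio hβ hw hρ
  exact ⟨C, fun n => hM.norm_pow_le hp hβ fun k => hC k n⟩

end IsWeightedForwardShift

end WeightedShift

theorem stmt_4_general (β : ℕ → ℝ) (hβ : ∀ k, 0 < β k)
    (hw : Filter.Tendsto (fun k => β (k + 1) / β k) Filter.atTop (nhds 1))
    (m : ℕ) (z : Fin m → ℂ) (hz : ∀ j, ‖z j‖ < 1)
    (S M : lp (fun _ : ℕ => ℂ) 2 →L[ℂ] lp (fun _ : ℕ => ℂ) 2)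
    (hS : ∀ f : lp (fun _ : ℕ => ℂ) 2, ∀ k : ℕ,
      S f k = ((β k / β (k + 1) : ℝ) : ℂ) * f (k + 1))
    (hM0 : ∀ f : lp (fun _ : ℕ => ℂ) 2, M f 0 = 0)
    (hM : ∀ f : lp (fun _ : ℕ => ℂ) 2, ∀ k : ℕ,
      M f (k + 1) = ((β (k + 1) / β k : ℝ) : ℂ) * f k) :
    (List.ofFn fun j : Fin m =>
        ((starRingEnd ℂ (z j)) • (1 : lp (fun _ : ℕ => ℂ) 2 →L[ℂ] lp (fun _ : ℕ => ℂ) 2) - S) *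
          Ring.inverse (1 - z j • S)).prod *
      (List.ofFn fun j : Fin m =>
        (z j • (1 : lp (fun _ : ℕ => ℂ) 2 →L[ℂ] lp (fun _ : ℕ => ℂ) 2) - M) *
          Ring.inverse (1 - (starRingEnd ℂ (z j)) • M)).prod = 1 := by
  have hp : 0 < (2 : ℝ≥0∞).toReal := by norm_num
  have hS' : IsWeightedBackwardShift β S := hS
  have hM' : IsWeightedForwardShift β M := ⟨hM0, hM⟩
  rw [List.ofFn_eq_map, List.ofFn_eq_map]
  exact blaschke_prod_mul_eq_one (hS'.mul_eq_one hM' fun k => (hβ k).ne') _ _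
    (fun j => isUnit_one_sub_smul_of_norm_pow_le
      (fun ρ hρ => hS'.exists_norm_pow_le_mul_pow hp hβ hw hρ) (hz j))
    (fun j => isUnit_one_sub_smul_of_norm_pow_le
      (fun ρ hρ => hM'.exists_norm_pow_le_mul_pow hp hβ hw hρ) ((Complex.norm_conj _).trans_lt (hz j)))
    (List.finRange m)

/-- `B*(S_β) B(M_z) = I` for a finite Blaschke product
`B(z) = ∏_j (z_j - z)/(1 - conj z_j · z)`, on the coefficient ℓ²-model of the
weighted Hardy space `H²_β` (`w_k → 1`): `B*(S_β) = ∏_j (conj z_j - S)(1 - z_j S)⁻¹`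
and `B(M_z) = ∏_j (z_j - M)(1 - conj z_j · M)⁻¹`. -/
theorem stmt_4 (β : ℕ → ℝ) (hβ0 : β 0 = 1) (hβ : ∀ k, 0 < β k)
    (hw : Filter.Tendsto (fun k => β (k + 1) / β k) Filter.atTop (nhds 1))
    (m : ℕ) (z : Fin m → ℂ) (hz : ∀ j, ‖z j‖ < 1)
    (S M : lp (fun _ : ℕ => ℂ) 2 →L[ℂ] lp (fun _ : ℕ => ℂ) 2)
    (hS : ∀ f : lp (fun _ : ℕ => ℂ) 2, ∀ k : ℕ,
      S f k = ((β k / β (k + 1) : ℝ) : ℂ) * f (k + 1))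
    (hM0 : ∀ f : lp (fun _ : ℕ => ℂ) 2, M f 0 = 0)
    (hM : ∀ f : lp (fun _ : ℕ => ℂ) 2, ∀ k : ℕ,
      M f (k + 1) = ((β (k + 1) / β k : ℝ) : ℂ) * f k) :
    (List.ofFn fun j : Fin m =>
        ((starRingEnd ℂ (z j)) • (1 : lp (fun _ : ℕ => ℂ) 2 →L[ℂ] lp (fun _ : ℕ => ℂ) 2) - S) *
          Ring.inverse (1 - z j • S)).prod *
      (List.ofFn fun j : Fin m =>
        (z j • (1 : lp (fun _ : ℕ => ℂ) 2 →L[ℂ] lp (fun _ : ℕ => ℂ) 2) - M) *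
          Ring.inverse (1 - (starRingEnd ℂ (z j)) • M)).prod = 1 :=
  stmt_4_general β hβ hw m z hz S M hS hM0 hM
end

section
/- Let $H^2_\beta$ be a weighted Hardy space with $w_k\to 1$ and $S_\beta$ the backward shift. Then the commutant $\{S_\beta\}' = \{g(S_\beta): g\in H^\infty_{\beta^{-1}}\}$, i.e., a bounded operator $W$ on $H^2_\beta$ satisfies $WS_\beta=S_\beta W$ if and only if $W = T_{\beta^{-1},\beta} M_g^* T_{\beta,\beta^{-1}}$ for some $g\in H^\infty_{\beta^{-1}}$. -/
/-!
Taking adjoints, `W` commutes with `S` iff `G = W*` commutes with the forward weighted shift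
`S*`, which maps `e_n / β_n` to `e_{n+1} / β_{n+1}`. Hence `G` is determined by `G e_0`: by
induction on `n`, `G (e_n / β_n) = (S*)ⁿ (G e_0)`, which in coordinates is the weighted
convolution with `a_j = β_j (G e_0)_j / β_0`, and by continuity the same formula holds on all of
`ℓ²`. Conversely every weighted convolution commutes coordinatewise with the forward weighted
shift, so any bounded operator given by one commutes with `S*`.
-/

open scoped lp

theorem lp.coeFn_apply_eq_of_forall_single {α 𝕜 : Type*} {E E' : α → Type*} [NormedField 𝕜]
    [∀ i, NormedAddCommGroup (E i)] [∀ i, NormedSpace 𝕜 (E i)]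
    [∀ i, NormedAddCommGroup (E' i)] [∀ i, NormedSpace 𝕜 (E' i)] [DecidableEq α]
    {p q : ENNReal} [Fact (1 ≤ p)] [Fact (1 ≤ q)] (hp : p ≠ ⊤)
    (G : lp E p →L[𝕜] lp E' q) (L : (∀ i, E i) →L[𝕜] (∀ i, E' i))
    (h : ∀ i x, ⇑(G (lp.single p i x)) = L (Pi.single i x)) (f : lp E p) :
    ⇑(G f) = L f := by
  have hf := lp.hasSum_single hp f
  refine (hf.mapL ((ContinuousLinearMap.pi (lp.evalCLM 𝕜 E' q)).comp G)).unique ?_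
  convert hf.mapL (L.comp (ContinuousLinearMap.pi (lp.evalCLM 𝕜 E p))) using 1
  · funext i
    exact h i (f i)
  · rfl

noncomputable section

namespace WeightedShift

variable (β : ℕ → ℝ)

/-- The coefficient action of `S_β*`, i.e. of `M_z` on `H²_{β⁻¹}`. -/
def fwdShift (f : ℕ → ℂ) : ℕ → ℂ
  | 0 => 0
  | k + 1 => ((β k / β (k + 1) : ℝ) : ℂ) * f k

/-- The coefficient action of `M_g` on `H²_{β⁻¹}`, for `g = ∑ a_j z^j`. -/
def weightedConv (a : ℕ → ℂ) : (ℕ → ℂ) →L[ℂ] (ℕ → ℂ) :=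
  ContinuousLinearMap.pi fun k => ((1 / β k : ℝ) : ℂ) •
    ∑ j ∈ Finset.range (k + 1), (a j * ((β (k - j) : ℝ) : ℂ)) • ContinuousLinearMap.proj (k - j)

variable {β}

theorem weightedConv_apply (a f : ℕ → ℂ) (k : ℕ) :
    weightedConv β a f k = ((1 / β k : ℝ) : ℂ) *
      ∑ j ∈ Finset.range (k + 1), a j * ((β (k - j) : ℝ) : ℂ) * f (k - j) := by
  simp [weightedConv]

theorem weightedConv_fwdShift (hβ : ∀ k, β k ≠ 0) (a f : ℕ → ℂ) :
    weightedConv β a (fwdShift β f) = fwdShift β (weightedConv β a f) := by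
  have hβ' (k : ℕ) : ((β k : ℝ) : ℂ) ≠ 0 := by exact_mod_cast hβ k
  funext k
  rcases k with _ | m
  · simp [weightedConv_apply, fwdShift]
  · have hterm : ∀ j ∈ Finset.range (m + 1),
        a j * ((β (m + 1 - j) : ℝ) : ℂ) * fwdShift β f (m + 1 - j) =
          a j * ((β (m - j) : ℝ) : ℂ) * f (m - j) := by
      intro j hj
      rw [Nat.sub_add_comm (Finset.mem_range_succ_iff.mp hj), fwdShift]
      have := hβ' (m - j + 1)
      push_cast
      field_simp
    rw [weightedConv_apply, Finset.sum_range_succ, Nat.sub_self, fwdShift, mul_zero, add_zero,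
      Finset.sum_congr rfl hterm, fwdShift, weightedConv_apply, ← mul_assoc]
    have := hβ' m
    have := hβ' (m + 1)
    push_cast
    field_simp

theorem weightedConv_single_zero (hβ : ∀ k, β k ≠ 0) (g : ℕ → ℂ) :
    weightedConv β (fun k => ((β k / β 0 : ℝ) : ℂ) * g k) (Pi.single 0 1) = g := by
  funext k
  rw [weightedConv_apply, Finset.sum_eq_single_of_mem k (Finset.self_mem_range_succ k)]
  · have : ((β 0 : ℝ) : ℂ) ≠ 0 := by exact_mod_cast hβ 0
    have : ((β k : ℝ) : ℂ) ≠ 0 := by exact_mod_cast hβ k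
    rw [Nat.sub_self, Pi.single_eq_same, mul_one]
    push_cast
    field_simp
  · intro j hj hjk
    rw [Pi.single_eq_of_ne (by have := Finset.mem_range.mp hj; omega), mul_zero]

variable {S : ℓ²(ℕ, ℂ) →L[ℂ] ℓ²(ℕ, ℂ)}
  (hS : ∀ f : ℓ²(ℕ, ℂ), ∀ k, S f k = ((β k / β (k + 1) : ℝ) : ℂ) * f (k + 1))
include hS

theorem coeFn_adjoint_apply (h : ℓ²(ℕ, ℂ)) : ⇑(S.adjoint h) = fwdShift β h := by
  funext k
  have hk : S.adjoint h k = inner ℂ (S (lp.single 2 k 1)) h := by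
    rw [← ContinuousLinearMap.adjoint_inner_right, lp.inner_single_left]
    simp
  rw [hk, lp.inner_eq_tsum]
  rcases k with _ | m
  · simp [hS, fwdShift]
  · rw [tsum_eq_single m]
    · simp [hS, fwdShift, Complex.conj_ofReal, mul_comm]
    · intro j hj
      simp [hS, lp.single_apply, hj]

theorem single_succ_eq_smul_adjoint_single (hβ : ∀ k, β k ≠ 0) (n : ℕ) :
    lp.single 2 (n + 1) 1 = ((β (n + 1) / β n : ℝ) : ℂ) • S.adjoint (lp.single 2 n 1) := by
  ext1
  funext k
  simp only [lp.coeFn_smul, coeFn_adjoint_apply hS, lp.coeFn_single]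
  rcases k with _ | m
  · simp [fwdShift]
  · rcases eq_or_ne m n with rfl | hmn
    · have : ((β m : ℝ) : ℂ) ≠ 0 := by exact_mod_cast hβ m
      have : ((β (m + 1) : ℝ) : ℂ) ≠ 0 := by exact_mod_cast hβ (m + 1)
      rw [Pi.smul_apply, fwdShift, Pi.single_eq_same, Pi.single_eq_same, smul_eq_mul]
      push_cast
      field_simp
    · simp [fwdShift, Pi.single_eq_of_ne hmn, Pi.single_eq_of_ne (Nat.succ_injective.ne hmn)]

theorem coeFn_apply_eq_weightedConv_of_commute (hβ : ∀ k, β k ≠ 0)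
    {G : ℓ²(ℕ, ℂ) →L[ℂ] ℓ²(ℕ, ℂ)} (hG : Commute G S.adjoint) (f : ℓ²(ℕ, ℂ)) :
    ⇑(G f) = weightedConv β (fun k => ((β k / β 0 : ℝ) : ℂ) * G (lp.single 2 0 1) k) f := by
  set a := fun k => ((β k / β 0 : ℝ) : ℂ) * G (lp.single 2 0 1) k
  let P (x : ℓ²(ℕ, ℂ)) : Prop := ⇑(G x) = weightedConv β a x
  have P_smul (c : ℂ) (x) (hx : P x) : P (c • x) := by
    simp only [P, map_smul, lp.coeFn_smul, hx]
  have P_adjoint (x) (hx : P x) : P (S.adjoint x) := by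
    simp only [P]
    rw [← mul_apply_eq_comp, hG.eq, mul_apply_eq_comp,
      coeFn_adjoint_apply hS, coeFn_adjoint_apply hS, hx, weightedConv_fwdShift hβ]
  have P_single (n : ℕ) : P (lp.single 2 n 1) := by
    induction n with
    | zero =>
      simp only [P, lp.coeFn_single]
      exact (weightedConv_single_zero hβ _).symm
    | succ n ih =>
      rw [single_succ_eq_smul_adjoint_single hS hβ]
      exact P_smul _ _ (P_adjoint _ ih)
  refine lp.coeFn_apply_eq_of_forall_single ENNReal.ofNat_ne_top G _ (fun n c => ?_) f
  rw [← lp.coeFn_single, ← mul_one c, ← smul_eq_mul, lp.single_smul]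
  exact P_smul c _ (P_single n)

theorem commute_adjoint_of_coeFn_apply_eq_weightedConv (hβ : ∀ k, β k ≠ 0) (a : ℕ → ℂ)
    {G : ℓ²(ℕ, ℂ) →L[ℂ] ℓ²(ℕ, ℂ)} (hG : ∀ f, ⇑(G f) = weightedConv β a f) :
    Commute G S.adjoint := by
  ext1 f
  ext1
  simp only [mul_apply_eq_comp, hG, coeFn_adjoint_apply hS, weightedConv_fwdShift hβ]

theorem commute_adjoint_iff_exists_weightedConv (hβ : ∀ k, β k ≠ 0)
    (G : ℓ²(ℕ, ℂ) →L[ℂ] ℓ²(ℕ, ℂ)) :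
    Commute G S.adjoint ↔ ∃ a, ∀ f, ⇑(G f) = weightedConv β a f :=
  ⟨fun hG => ⟨_, coeFn_apply_eq_weightedConv_of_commute hS hβ hG⟩,
    fun ⟨a, hG⟩ => commute_adjoint_of_coeFn_apply_eq_weightedConv hS hβ a hG⟩

end WeightedShift

end

open WeightedShift in
theorem stmt_10_general (β : ℕ → ℝ) (hβ : ∀ k, 0 < β k)
    (S : lp (fun _ : ℕ => ℂ) 2 →L[ℂ] lp (fun _ : ℕ => ℂ) 2)
    (hS : ∀ f : lp (fun _ : ℕ => ℂ) 2, ∀ k : ℕ,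
      S f k = ((β k / β (k + 1) : ℝ) : ℂ) * f (k + 1))
    (W : lp (fun _ : ℕ => ℂ) 2 →L[ℂ] lp (fun _ : ℕ => ℂ) 2) :
    W ∘L S = S ∘L W ↔
    ∃ (a : ℕ → ℂ) (G : lp (fun _ : ℕ => ℂ) 2 →L[ℂ] lp (fun _ : ℕ => ℂ) 2),
      (∀ f : lp (fun _ : ℕ => ℂ) 2, ∀ k : ℕ,
        G f k = ((1 / β k : ℝ) : ℂ) *
          ∑ j ∈ Finset.range (k + 1), a j * ((β (k - j) : ℝ) : ℂ) * f (k - j)) ∧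
      W = ContinuousLinearMap.adjoint G := by
  have hcomm : W ∘L S = S ∘L W ↔ Commute W.adjoint S.adjoint := by
    rw [← ContinuousLinearMap.star_eq_adjoint, ← ContinuousLinearMap.star_eq_adjoint,
      commute_star_star]
    rfl
  rw [hcomm, commute_adjoint_iff_exists_weightedConv hS fun k => (hβ k).ne']
  constructor
  · rintro ⟨a, ha⟩
    exact ⟨a, W.adjoint, fun f k => by rw [ha, weightedConv_apply], W.adjoint_adjoint.symm⟩
  · rintro ⟨a, G, hG, rfl⟩
    exact ⟨a, fun f => funext fun k => by rw [G.adjoint_adjoint, hG, weightedConv_apply]⟩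

/-- the commutant of `S_β` on `H²_β` (`w_k → 1`) is
`{g(S_β) : g ∈ H^∞_{β⁻¹}}`: a bounded operator `W` commutes with `S_β` iff
`W = T_{β⁻¹,β} M_g* T_{β,β⁻¹}` for some multiplier `g` of `H²_{β⁻¹}`. In the
coefficient ℓ²-models the isometries `T` are the identity, `S_β` acts by
`(S f)(k) = (β_k/β_{k+1}) f(k+1)`, and `M_g` (for `g` with Taylor coefficients
`a_j`) acts on the `H²_{β⁻¹}`-model by
`(G f)(k) = (1/β_k) Σ_{j≤k} a_j β_{k-j} f(k-j)`; `g ∈ H^∞_{β⁻¹}` is encoded by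
the existence of such a bounded operator `G`. -/
theorem stmt_10 (β : ℕ → ℝ) (hβ0 : β 0 = 1) (hβ : ∀ k, 0 < β k)
    (hw : Filter.Tendsto (fun k => β (k + 1) / β k) Filter.atTop (nhds 1))
    (S : lp (fun _ : ℕ => ℂ) 2 →L[ℂ] lp (fun _ : ℕ => ℂ) 2)
    (hS : ∀ f : lp (fun _ : ℕ => ℂ) 2, ∀ k : ℕ,
      S f k = ((β k / β (k + 1) : ℝ) : ℂ) * f (k + 1))
    (W : lp (fun _ : ℕ => ℂ) 2 →L[ℂ] lp (fun _ : ℕ => ℂ) 2) :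
    W ∘L S = S ∘L W ↔
    ∃ (a : ℕ → ℂ) (G : lp (fun _ : ℕ => ℂ) 2 →L[ℂ] lp (fun _ : ℕ => ℂ) 2),
      (∀ f : lp (fun _ : ℕ => ℂ) 2, ∀ k : ℕ,
        G f k = ((1 / β k : ℝ) : ℂ) *
          ∑ j ∈ Finset.range (k + 1), a j * ((β (k - j) : ℝ) : ℂ) * f (k - j)) ∧
      W = ContinuousLinearMap.adjoint G :=
  stmt_10_general β hβ S hS W
end

section
/- Let $t\in(0,1)$ and $\varphi(z)=\frac{t-z}{1-tz}$. Then for every integer $N\ge 1$, the $H^2$ norm of $(\varphi')^N$ satisfies $\|(\varphi')^N\|_{H^2}^2 \ge \frac{(1+t)^{2N}}{2\pi(2N-1)(1-t)^{2N-2}}$. In particular $\|(\varphi')^N\|_{H^2}\to\infty$ as $N\to\infty$. -/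
/-!
On `[0, 2]` the bound `1 - cos θ ≤ θ² / 2` gives `|1 - t e^{iθ}|² ≤ (1 - t + tθ)²`, so the integrand
dominates `(1 - t²)^{2N} / (1 - t + tθ)^{4N}`, whose integral over `[0, 2]` is explicit. Bernoulli's
inequality `b^{n+1} ≥ a^n (a + (n + 1)(b - a))`, applied to `a = 1 - t`, `b = 1 + t`, turns the
explicit value into the stated bound; applied once more, it shows that the bound is at least
`t² N / π`, which gives the divergence.
-/

open Real intervalIntegral Filter

lemma pow_mul_add_mul_sub_le_pow_succ {a b : ℝ} (ha : 0 ≤ a) (hab : a ≤ b) (n : ℕ) :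
    a ^ n * (a + (n + 1) * (b - a)) ≤ b ^ (n + 1) := by
  have := pow_add_mul_le_add_pow ha (by linarith : 0 ≤ 2 * a + (b - a)) (n + 1)
  rw [add_sub_cancel, Nat.add_sub_cancel] at this
  push_cast at this
  linear_combination this

lemma mul_sub_div_le_one_div_pow_sub_one_div_pow {a b : ℝ} (ha : 0 < a) (hab : a ≤ b) (n : ℕ) :
    (n + 1) * (b - a) / (a ^ (n + 1) * (a + (n + 1) * (b - a))) ≤
      1 / a ^ (n + 1) - 1 / b ^ (n + 1) := by
  have : 0 < a + (n + 1) * (b - a) := by nlinarith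
  calc (n + 1) * (b - a) / (a ^ (n + 1) * (a + (n + 1) * (b - a)))
      = 1 / a ^ (n + 1) - 1 / (a ^ n * (a + (n + 1) * (b - a))) := by
        field_simp; ring
    _ ≤ 1 / a ^ (n + 1) - 1 / b ^ (n + 1) := by
        gcongr; exact pow_mul_add_mul_sub_le_pow_succ ha.le hab n

lemma integral_one_div_add_mul_pow {a b c : ℝ} (ha : 0 < a) (hb : 0 < b) (hc : 0 ≤ c) (n : ℕ) :
    ∫ x in (0:ℝ)..c, 1 / (a + b * x) ^ (n + 2) =
      (1 / a ^ (n + 1) - 1 / (a + b * c) ^ (n + 1)) / (b * (n + 1)) := by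
  have hpos : (0 : ℝ) ∉ Set.uIcc a (a + b * c) := by
    rw [Set.uIcc_of_le (by nlinarith)]; exact fun h => ha.not_ge h.1
  have key := integral_zpow (a := a) (b := a + b * c) (n := -(n + 2 : ℕ))
    (Or.inr ⟨by omega, hpos⟩)
  rw [show -((n + 2 : ℕ) : ℤ) + 1 = -((n + 1 : ℕ) : ℤ) by push_cast; ring,
    show ((-((n + 2 : ℕ) : ℤ) : ℤ) : ℝ) + 1 = -((n : ℝ) + 1) by push_cast; ring] at key
  simp only [zpow_neg, zpow_natCast] at key
  simp only [one_div]
  rw [integral_comp_add_mul (fun x => (x ^ (n + 2))⁻¹) hb.ne', mul_zero, add_zero, key,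
    smul_eq_mul]
  have : (n : ℝ) + 1 ≠ 0 := by positivity
  field_simp
  ring

lemma two_div_le_integral_one_div_sub_add_mul_pow {t : ℝ} (ht0 : 0 < t) (ht1 : t < 1) (n : ℕ) :
    2 / ((1 - t) ^ (n + 1) * (1 - t + 2 * (n + 1) * t)) ≤
      ∫ x in (0:ℝ)..2, 1 / (1 - t + t * x) ^ (n + 2) := by
  rw [integral_one_div_add_mul_pow (by linarith) ht0 zero_le_two]
  have h := mul_sub_div_le_one_div_pow_sub_one_div_pow (by linarith : 0 < 1 - t)
    (by linarith : 1 - t ≤ 1 + t) n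
  rw [show 1 + t - (1 - t) = 2 * t by ring] at h
  rw [show 1 - t + t * 2 = 1 + t by ring, le_div_iff₀ (by positivity)]
  exact (le_of_eq (by ring)).trans h

lemma sq_one_sub_le_one_add_sq_sub_two_mul_cos {t : ℝ} (ht : 0 ≤ t) (x : ℝ) :
    (1 - t) ^ 2 ≤ 1 + t ^ 2 - 2 * t * cos x := by
  nlinarith [cos_le_one x]

lemma one_add_sq_sub_two_mul_cos_le_sq {t x : ℝ} (ht0 : 0 ≤ t) (ht1 : t ≤ 1) (hx0 : 0 ≤ x)
    (hx2 : x ≤ 2) : 1 + t ^ 2 - 2 * t * cos x ≤ (1 - t + t * x) ^ 2 := by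
  have : 0 ≤ t * x * (1 - t) * (2 - x) :=
    mul_nonneg (mul_nonneg (mul_nonneg ht0 hx0) (sub_nonneg.2 ht1)) (sub_nonneg.2 hx2)
  nlinarith [one_sub_sq_div_two_le_cos (x := x)]

lemma mul_integral_le_integral_poisson_pow {t : ℝ} (ht0 : 0 < t) (ht1 : t < 1) (k : ℕ) :
    (1 - t ^ 2) ^ k * ∫ x in (0:ℝ)..2, 1 / (1 - t + t * x) ^ (2 * k) ≤
      ∫ θ in (0:ℝ)..(2 * π), (1 - t ^ 2) ^ k / (1 + t ^ 2 - 2 * t * cos θ) ^ k := by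
  have hD : ∀ θ, 0 < 1 + t ^ 2 - 2 * t * cos θ := fun θ =>
    (pow_pos (sub_pos.2 ht1) 2).trans_le (sq_one_sub_le_one_add_sq_sub_two_mul_cos ht0.le θ)
  have hL : ∀ x, 0 ≤ x → 0 < 1 - t + t * x := fun x hx => by nlinarith
  have hnum : 0 ≤ (1 - t ^ 2) ^ k := pow_nonneg (by nlinarith) k
  have hf : Continuous fun θ => (1 - t ^ 2) ^ k / (1 + t ^ 2 - 2 * t * cos θ) ^ k :=
    continuous_const.div (by fun_prop) fun θ => (pow_pos (hD θ) k).ne'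
  rw [← integral_const_mul]
  calc ∫ x in (0:ℝ)..2, (1 - t ^ 2) ^ k * (1 / (1 - t + t * x) ^ (2 * k))
      ≤ ∫ θ in (0:ℝ)..2, (1 - t ^ 2) ^ k / (1 + t ^ 2 - 2 * t * cos θ) ^ k := by
        refine integral_mono_on zero_le_two ?_ (hf.intervalIntegrable _ _) fun x hx => ?_
        · refine ContinuousOn.intervalIntegrable ?_
          rw [Set.uIcc_of_le zero_le_two]
          exact continuousOn_const.mul (continuousOn_const.div (by fun_prop) fun x hx =>
            (pow_pos (hL x hx.1) _).ne')
        · rw [mul_one_div, pow_mul]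
          exact div_le_div_of_nonneg_left hnum (pow_pos (hD x) k)
            (pow_le_pow_left₀ (hD x).le (one_add_sq_sub_two_mul_cos_le_sq ht0.le ht1.le hx.1 hx.2) k)
    _ ≤ ∫ θ in (0:ℝ)..(2 * π), (1 - t ^ 2) ^ k / (1 + t ^ 2 - 2 * t * cos θ) ^ k :=
        integral_mono_interval le_rfl zero_le_two (by linarith [pi_gt_three])
          (Eventually.of_forall fun θ => div_nonneg hnum (pow_pos (hD θ) k).le)
          (hf.intervalIntegrable _ _)

lemma div_le_mul_one_sub_sq_pow {t : ℝ} (ht0 : 0 < t) (ht1 : t < 1) (M : ℕ) :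
    (1 + t) ^ (2 * (M + 1)) / ((2 * M + 1) * (1 - t) ^ (2 * M)) ≤
      (1 - t ^ 2) ^ (2 * (M + 1)) *
        (2 / ((1 - t) ^ (4 * M + 3) * (1 - t + 2 * (4 * M + 3) * t))) := by
  have ha : 0 < 1 - t := by linarith
  have hs : 0 < 1 - t + 2 * (4 * M + 3) * t := by positivity
  calc (1 + t) ^ (2 * (M + 1)) / ((2 * M + 1) * (1 - t) ^ (2 * M))
      = (1 + t) ^ (2 * (M + 1)) / (1 - t) ^ (2 * M) * (1 / (2 * M + 1)) := by field_simp
    _ ≤ (1 + t) ^ (2 * (M + 1)) / (1 - t) ^ (2 * M) *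
          (2 / ((1 - t) * (1 - t + 2 * (4 * M + 3) * t))) := by
        gcongr _ * ?_
        rw [div_le_div_iff₀ (by positivity) (by positivity)]
        -- (8M + 5)(4M + 2 - (1 - t)(1 + (8M + 5)t)) = ((8M + 5)t - (4M + 2))² + 16M² + 12M + 1
        nlinarith [sq_nonneg ((8 * M + 5) * t - (4 * M + 2)), (Nat.cast_nonneg M : (0:ℝ) ≤ M)]
    _ = _ := by
        rw [show 1 - t ^ 2 = (1 - t) * (1 + t) by ring, mul_pow,
          show 4 * M + 3 = 2 * (M + 1) + 2 * M + 1 by ring, pow_succ, pow_add]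
        field_simp

lemma div_le_integral_poisson_pow {t : ℝ} (ht0 : 0 < t) (ht1 : t < 1) {N : ℕ} (hN : 1 ≤ N) :
    (1 + t) ^ (2 * N) / (2 * π * (2 * (N : ℝ) - 1) * (1 - t) ^ (2 * N - 2)) ≤
      (1 / (2 * π)) *
        ∫ θ in (0:ℝ)..(2 * π), (1 - t ^ 2) ^ (2 * N) / (1 + t ^ 2 - 2 * t * cos θ) ^ (2 * N) := by
  obtain ⟨M, rfl⟩ := Nat.exists_eq_add_of_le' hN
  have hcmp := mul_integral_le_integral_poisson_pow ht0 ht1 (2 * (M + 1))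
  have hI := two_div_le_integral_one_div_sub_add_mul_pow ht0 ht1 (4 * M + 2)
  rw [show 2 * (2 * (M + 1)) = 4 * M + 2 + 2 by ring] at hcmp
  push_cast at hI
  rw [show 4 * M + 2 + 1 = 4 * M + 3 by ring, show 4 * (M : ℝ) + 2 + 1 = 4 * M + 3 by ring] at hI
  rw [show 2 * (M + 1) - 2 = 2 * M by omega, Nat.cast_add_one,
    show 2 * ((M : ℝ) + 1) - 1 = 2 * M + 1 by ring]
  calc (1 + t) ^ (2 * (M + 1)) / (2 * π * (2 * M + 1) * (1 - t) ^ (2 * M))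
      = 1 / (2 * π) * ((1 + t) ^ (2 * (M + 1)) / ((2 * M + 1) * (1 - t) ^ (2 * M))) := by
        field_simp
    _ ≤ _ := by
        gcongr
        exact (div_le_mul_one_sub_sq_pow ht0 ht1 M).trans
          ((mul_le_mul_of_nonneg_left hI (pow_nonneg (by nlinarith) _)).trans hcmp)

lemma sq_div_pi_mul_natCast_le_div {t : ℝ} (ht0 : 0 < t) (ht1 : t < 1) {N : ℕ} (hN : 1 ≤ N) :
    t ^ 2 / π * N ≤ (1 + t) ^ (2 * N) / (2 * π * (2 * (N : ℝ) - 1) * (1 - t) ^ (2 * N - 2)) := by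
  obtain ⟨M, rfl⟩ := Nat.exists_eq_add_of_le' hN
  have ha : 0 < 1 - t := by linarith
  have hbern : 2 * t * (M + 1) * (1 - t) ^ M ≤ (1 + t) ^ (M + 1) := by
    have := pow_mul_add_mul_sub_le_pow_succ ha.le (by linarith : 1 - t ≤ 1 + t) M
    nlinarith [mul_pos (pow_pos ha M) ha]
  have hsq : 4 * t ^ 2 * (M + 1) ^ 2 * (1 - t) ^ (2 * M) ≤ (1 + t) ^ (2 * (M + 1)) := by
    rw [pow_mul', pow_mul']
    calc 4 * t ^ 2 * (M + 1) ^ 2 * ((1 - t) ^ M) ^ 2 = (2 * t * (M + 1) * (1 - t) ^ M) ^ 2 := by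
          ring
      _ ≤ ((1 + t) ^ (M + 1)) ^ 2 := pow_le_pow_left₀ (by positivity) hbern 2
  rw [show 2 * (M + 1) - 2 = 2 * M by omega, Nat.cast_add_one,
    show 2 * ((M : ℝ) + 1) - 1 = 2 * M + 1 by ring]
  calc t ^ 2 / π * (M + 1)
      ≤ 4 * t ^ 2 * (M + 1) ^ 2 * (1 - t) ^ (2 * M) / (2 * π * (2 * M + 1) * (1 - t) ^ (2 * M)) := by
        rw [div_mul_eq_mul_div, div_le_div_iff₀ pi_pos (by positivity)]
        have : 0 ≤ t ^ 2 * (M + 1) * (1 - t) ^ (2 * M) := by positivity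
        nlinarith [pi_pos]
    _ ≤ _ := by gcongr

/-- lower bound for the `H²` norm of `(φ')^N`, `φ(z)=(t-z)/(1-tz)`,
expressed via the boundary integral (`|1-te^{iθ}|² = 1+t²-2t cos θ`), and the
consequent divergence of these norms. -/
theorem stmt_12 (t : ℝ) (ht : t ∈ Set.Ioo (0:ℝ) 1) :
    (∀ N : ℕ, 1 ≤ N →
      (1 + t) ^ (2 * N) / (2 * Real.pi * (2 * (N : ℝ) - 1) * (1 - t) ^ (2 * N - 2)) ≤
        (1 / (2 * Real.pi)) *
          ∫ θ in (0:ℝ)..(2 * Real.pi),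
            ((1 - t ^ 2) ^ (2 * N)) / ((1 + t ^ 2 - 2 * t * Real.cos θ) ^ (2 * N))) ∧
    Filter.Tendsto
      (fun N : ℕ =>
        Real.sqrt ((1 / (2 * Real.pi)) *
          ∫ θ in (0:ℝ)..(2 * Real.pi),
            ((1 - t ^ 2) ^ (2 * N)) / ((1 + t ^ 2 - 2 * t * Real.cos θ) ^ (2 * N))))
      Filter.atTop Filter.atTop := by
  obtain ⟨ht0, ht1⟩ := ht
  have hbound := fun N (hN : 1 ≤ N) => div_le_integral_poisson_pow ht0 ht1 hN
  refine ⟨hbound, tendsto_sqrt_atTop.comp (tendsto_atTop_mono' _ ?_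
    (tendsto_natCast_atTop_atTop.const_mul_atTop (by positivity : 0 < t ^ 2 / π)))⟩
  filter_upwards [eventually_ge_atTop 1] with N hN
  exact (sq_div_pi_mul_natCast_le_div ht0 ht1 hN).trans (hbound N hN)
end
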